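/- arXiv:2406.09010 — 2 statements merged into one kernel-verified Lean document; each statement's English description precedes it below -/
import Mathlib

section
/- With f, g pdfs, θ = arccos⟨√f,√g⟩ ∈ (0, π/2], ζ as above and h = ζ², for every ε ∈ [0,1] the function (cos(εθ)√f + sin(εθ)ζ)² = cos²(εθ) f + sin²(εθ) h + sin(2εθ) √f · ζ is a probability density function. -/
open MeasureTheory

/-- Proposition 1: with `θ = arccos⟨√f,√g⟩ ∈ (0, π/2]`, `ζ` the normalized component of
`√g` orthogonal to `√f` and `h = ζ²`, for every `ε ∈ [0,1]` the function
`(cos(εθ)√f + sin(εθ)ζ)² = cos²(εθ) f + sin²(εθ) h + sin(2εθ) √f ζ` is a pdf. -/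
theorem stmt_3 (f g : ℝ → ℝ)
    (hf0 : ∀ x, 0 ≤ f x) (hfm : Measurable f) (hf1 : ∫ x, f x = 1)
    (hg0 : ∀ x, 0 ≤ g x) (hgm : Measurable g) (hg1 : ∫ x, g x = 1)
    (c : ℝ) (hc : c = ∫ x, Real.sqrt (f x) * Real.sqrt (g x))
    (hc0 : 0 < c) (hc1 : c < 1)
    (θ : ℝ) (hθ : θ = Real.arccos c)
    (ζ : ℝ → ℝ)
    (hζ : ∀ x, ζ x = (Real.sqrt (g x) - c * Real.sqrt (f x)) / Real.sqrt (1 - c ^ 2))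
    (h : ℝ → ℝ) (hh : ∀ x, h x = (ζ x) ^ 2)
    (ε : ℝ) (hε : ε ∈ Set.Icc (0 : ℝ) 1) :
    (∀ x, (Real.cos (ε * θ) * Real.sqrt (f x) + Real.sin (ε * θ) * ζ x) ^ 2
        = Real.cos (ε * θ) ^ 2 * f x + Real.sin (ε * θ) ^ 2 * h x
          + Real.sin (2 * ε * θ) * (Real.sqrt (f x) * ζ x)) ∧
    (∀ x, 0 ≤ (Real.cos (ε * θ) * Real.sqrt (f x) + Real.sin (ε * θ) * ζ x) ^ 2) ∧
    (∫ x, (Real.cos (ε * θ) * Real.sqrt (f x) + Real.sin (ε * θ) * ζ x) ^ 2) = 1 := by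
  have hfi : Integrable f := by
    by_contra hni
    rw [integral_undef hni] at hf1; norm_num at hf1
  have hgi : Integrable g := by
    by_contra hni
    rw [integral_undef hni] at hg1; norm_num at hg1
  have hspos : 0 < Real.sqrt (1 - c ^ 2) := Real.sqrt_pos.2 (by nlinarith)
  have hs2 : Real.sqrt (1 - c ^ 2) ^ 2 = 1 - c ^ 2 :=
    Real.sq_sqrt (by nlinarith)
  set s := Real.sqrt (1 - c ^ 2) with hsdef
  have hfgm : Measurable (fun x => Real.sqrt (f x) * Real.sqrt (g x)) :=
    (hfm.sqrt).mul (hgm.sqrt)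
  have hfgi : Integrable (fun x => Real.sqrt (f x) * Real.sqrt (g x)) := by
    refine Integrable.mono' ((hfi.add hgi).div_const 2) hfgm.aestronglyMeasurable ?_
    filter_upwards with x
    have h1 := Real.sq_sqrt (hf0 x)
    have h2 := Real.sq_sqrt (hg0 x)
    have h3 := sq_nonneg (Real.sqrt (f x) - Real.sqrt (g x))
    have h4 : 0 ≤ Real.sqrt (f x) * Real.sqrt (g x) :=
      mul_nonneg (Real.sqrt_nonneg _) (Real.sqrt_nonneg _)
    rw [Real.norm_eq_abs, abs_of_nonneg h4]
    simp only [Pi.add_apply]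
    nlinarith
  -- pointwise formulas
  have key1 : ∀ x, Real.sqrt (f x) * ζ x
      = (Real.sqrt (f x) * Real.sqrt (g x) - c * f x) / s := by
    intro x
    rw [hζ x]
    have h1 := Real.sq_sqrt (hf0 x)
    field_simp
    nlinarith [h1]
  have key2 : ∀ x, (ζ x) ^ 2
      = (g x - 2 * c * (Real.sqrt (f x) * Real.sqrt (g x)) + c ^ 2 * f x) / (1 - c ^ 2) := by
    intro x
    rw [hζ x]
    rw [div_pow, hs2]
    congr 1
    have h1 := Real.sq_sqrt (hf0 x)
    have h2 := Real.sq_sqrt (hg0 x)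
    nlinarith
  -- integrability of the pieces
  have i1 : Integrable (fun x => Real.sqrt (f x) * ζ x) := by
    have : Integrable (fun x => (Real.sqrt (f x) * Real.sqrt (g x) - c * f x) / s) :=
      ((hfgi.sub (hfi.const_mul c)).div_const s)
    exact this.congr (by filter_upwards with x using (key1 x).symm)
  have i2 : Integrable (fun x => (ζ x) ^ 2) := by
    have : Integrable (fun x =>
        (g x - 2 * c * (Real.sqrt (f x) * Real.sqrt (g x)) + c ^ 2 * f x) / (1 - c ^ 2)) :=
      (((hgi.sub (hfgi.const_mul (2 * c))).add (hfi.const_mul (c ^ 2))).div_const _)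
    exact this.congr (by filter_upwards with x using (key2 x).symm)
  -- integrals of the pieces
  have iaf : Integrable (fun x => c * f x) := hfi.const_mul c
  have iag : Integrable (fun x => 2 * c * (Real.sqrt (f x) * Real.sqrt (g x))) :=
    hfgi.const_mul (2 * c)
  have iasub : Integrable (fun x => g x - 2 * c * (Real.sqrt (f x) * Real.sqrt (g x))) :=
    hgi.sub iag
  have iacf : Integrable (fun x => c ^ 2 * f x) := hfi.const_mul (c ^ 2)
  have int1 : (∫ x, Real.sqrt (f x) * ζ x) = 0 := by
    have : (∫ x, Real.sqrt (f x) * ζ x)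
        = (∫ x, (Real.sqrt (f x) * Real.sqrt (g x) - c * f x) / s) := by
      congr 1; funext x; exact key1 x
    rw [this, integral_div, integral_sub hfgi iaf, integral_const_mul,
      hf1, ← hc]
    simp
  have int2 : (∫ x, (ζ x) ^ 2) = 1 := by
    have : (∫ x, (ζ x) ^ 2)
        = (∫ x, (g x - 2 * c * (Real.sqrt (f x) * Real.sqrt (g x)) + c ^ 2 * f x) / (1 - c ^ 2)) := by
      congr 1; funext x; exact key2 x
    rw [this, integral_div, integral_add iasub iacf,
      integral_sub hgi iag, integral_const_mul, integral_const_mul,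
      hg1, hf1, ← hc]
    have hne : (1 : ℝ) - c ^ 2 ≠ 0 := by nlinarith
    field_simp
    ring
  refine ⟨?_, ?_, ?_⟩
  · intro x
    rw [hh x, show (2 : ℝ) * ε * θ = 2 * (ε * θ) by ring, Real.sin_two_mul,
      add_sq, mul_pow, mul_pow, Real.sq_sqrt (hf0 x)]
    ring
  · intro x; positivity
  · have hpw : ∀ x, (Real.cos (ε * θ) * Real.sqrt (f x) + Real.sin (ε * θ) * ζ x) ^ 2
        = Real.cos (ε * θ) ^ 2 * f x + Real.sin (ε * θ) ^ 2 * (ζ x) ^ 2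
          + (2 * Real.sin (ε * θ) * Real.cos (ε * θ)) * (Real.sqrt (f x) * ζ x) := by
      intro x
      rw [add_sq, mul_pow, mul_pow, Real.sq_sqrt (hf0 x)]
      ring
    rw [show (∫ x, (Real.cos (ε * θ) * Real.sqrt (f x) + Real.sin (ε * θ) * ζ x) ^ 2)
        = ∫ x, Real.cos (ε * θ) ^ 2 * f x + Real.sin (ε * θ) ^ 2 * (ζ x) ^ 2
          + (2 * Real.sin (ε * θ) * Real.cos (ε * θ)) * (Real.sqrt (f x) * ζ x) by
        congr 1; funext x; exact hpw x]
    have j1 : Integrable (fun x => Real.cos (ε * θ) ^ 2 * f x) := hfi.const_mul _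
    have j2 : Integrable (fun x => Real.sin (ε * θ) ^ 2 * (ζ x) ^ 2) := i2.const_mul _
    have j3 : Integrable (fun x => Real.cos (ε * θ) ^ 2 * f x
        + Real.sin (ε * θ) ^ 2 * (ζ x) ^ 2) := j1.add j2
    have j4 : Integrable (fun x =>
        (2 * Real.sin (ε * θ) * Real.cos (ε * θ)) * (Real.sqrt (f x) * ζ x)) := i1.const_mul _
    rw [integral_add j3 j4, integral_add j1 j2,
      integral_const_mul, integral_const_mul, integral_const_mul, hf1, int1, int2]
    simp [Real.sin_sq_add_cos_sq]
end

section
/- Under the hypotheses of Theorem 1 (P(x, A\{x}) ≥ cQ(x, A\{x}) off the diagonal, common invariant density ψ, c > 0), for every t ∈ L²(ψ) with E_ψ t = 0 one has ⟨Pt, t⟩_ψ ≤ c⟨Qt, t⟩_ψ + (1−c)σ²_t, where σ²_t = E_ψ t². -/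
open MeasureTheory ProbabilityTheory
open scoped ENNReal

/-!
For a `ψ`-invariant Markov kernel `K`, expanding the square in the Dirichlet form
`𝓔_K(t) = ½ ∫∫ (t y - t x)² K(x, dy) ψ(dx)` gives `𝓔_K(t) = ‖t‖² - ⟨Kt, t⟩` in `L²(ψ)`.
The integrand vanishes on the diagonal, so the off-diagonal domination `P ≥ c Q` yields
`𝓔_P(t) ≥ c 𝓔_Q(t)` directly, without Tierney's covariance ordering, and this rearranges to
the claim.
-/
section CompProd

variable {α β : Type*} [MeasurableSpace α] [MeasurableSpace β]
  {μ : Measure α} [SFinite μ] {κ : Kernel α β} {f : α → ℝ} {g : β → ℝ}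

lemma MeasureTheory.MemLp.comp_fst_compProd [IsMarkovKernel κ] {p : ℝ≥0∞} (hf : MemLp f p μ) :
    MemLp (fun z => f z.1) p (μ ⊗ₘ κ) := by
  refine MemLp.comp_of_map ?_ measurable_fst.aemeasurable
  rwa [← Measure.fst, Measure.fst_compProd]

lemma MeasureTheory.MemLp.comp_snd_compProd [IsSFiniteKernel κ] {p : ℝ≥0∞}
    (hg : MemLp g p (κ ∘ₘ μ)) : MemLp (fun z => g z.2) p (μ ⊗ₘ κ) := by
  refine MemLp.comp_of_map ?_ measurable_snd.aemeasurable
  rwa [← Measure.snd, Measure.snd_compProd]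

lemma integral_comp_fst_compProd [IsMarkovKernel κ] (hf : AEStronglyMeasurable f μ) :
    ∫ z, f z.1 ∂(μ ⊗ₘ κ) = ∫ x, f x ∂μ := by
  rw [← Measure.fst_compProd μ κ, Measure.fst] at hf
  rw [← integral_map measurable_fst.aemeasurable hf, ← Measure.fst, Measure.fst_compProd]

lemma integral_comp_snd_compProd [IsSFiniteKernel κ] (hg : AEStronglyMeasurable g (κ ∘ₘ μ)) :
    ∫ z, g z.2 ∂(μ ⊗ₘ κ) = ∫ x, g x ∂(κ ∘ₘ μ) := by
  rw [← Measure.snd_compProd μ κ, Measure.snd] at hg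
  rw [← integral_map measurable_snd.aemeasurable hg, ← Measure.snd, Measure.snd_compProd]

end CompProd

section OffSingleton

variable {X : Type*} [MeasurableSpace X] [MeasurableSingletonClass X]
  {μ ν : Measure X} {x : X} {f : X → ℝ≥0∞}

lemma lintegral_eq_setLIntegral_compl_singleton (hf : f x = 0) :
    ∫⁻ y, f y ∂μ = ∫⁻ y in {x}ᶜ, f y ∂μ := by
  rw [← lintegral_add_compl f (measurableSet_singleton x), lintegral_singleton, hf, zero_mul,
    zero_add]

lemma const_mul_lintegral_le_of_le_off_singleton {a : ℝ≥0∞}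
    (h : ∀ A, MeasurableSet A → a * ν (A \ {x}) ≤ μ (A \ {x})) (hf : f x = 0) :
    a * ∫⁻ y, f y ∂ν ≤ ∫⁻ y, f y ∂μ := by
  have hle : a • ν.restrict {x}ᶜ ≤ μ.restrict {x}ᶜ := by
    refine Measure.le_iff.2 fun A hA => ?_
    simpa only [Measure.smul_apply, Measure.restrict_apply hA, smul_eq_mul, ← Set.sdiff_eq]
      using h A hA
  calc a * ∫⁻ y, f y ∂ν = ∫⁻ y, f y ∂(a • ν.restrict {x}ᶜ) := by
        rw [lintegral_smul_measure, smul_eq_mul, ← lintegral_eq_setLIntegral_compl_singleton hf]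
    _ ≤ ∫⁻ y in {x}ᶜ, f y ∂μ := lintegral_mono' hle le_rfl
    _ = ∫⁻ y, f y ∂μ := (lintegral_eq_setLIntegral_compl_singleton hf).symm

end OffSingleton

namespace ProbabilityTheory

variable {X : Type*} [MeasurableSpace X]

noncomputable def dirichletForm (ψ : Measure X) (K : Kernel X X) (t : X → ℝ) : ℝ :=
  2⁻¹ * ∫ z, (t z.2 - t z.1) ^ 2 ∂(ψ ⊗ₘ K)

variable {ψ : Measure X} [SFinite ψ] {K : Kernel X X} [IsMarkovKernel K]
  {t : X → ℝ}

lemma dirichletForm_congr (hK : K ∘ₘ ψ = ψ) {t' : X → ℝ} (h : t =ᵐ[ψ] t') :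
    dirichletForm ψ K t = dirichletForm ψ K t' := by
  have h₁ : (fun z : X × X => t z.1) =ᵐ[ψ ⊗ₘ K] fun z => t' z.1 :=
    ae_eq_comp measurable_fst.aemeasurable (by rwa [← Measure.fst, Measure.fst_compProd])
  have h₂ : (fun z : X × X => t z.2) =ᵐ[ψ ⊗ₘ K] fun z => t' z.2 :=
    ae_eq_comp measurable_snd.aemeasurable (by rwa [← Measure.snd, Measure.snd_compProd, hK])
  unfold dirichletForm
  congr 1
  refine integral_congr_ae ?_
  filter_upwards [h₁, h₂] with z hz₁ hz₂
  simp only [hz₁, hz₂]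

lemma dirichletForm_eq (hK : K ∘ₘ ψ = ψ) (ht : MemLp t 2 ψ) :
    dirichletForm ψ K t = ∫ x, t x ^ 2 ∂ψ - ∫ x, (∫ y, t y ∂(K x)) * t x ∂ψ := by
  have ht' : MemLp t 2 (K ∘ₘ ψ) := by rwa [hK]
  have h₁ : MemLp (fun z : X × X => t z.1) 2 (ψ ⊗ₘ K) := ht.comp_fst_compProd
  have h₂ : MemLp (fun z : X × X => t z.2) 2 (ψ ⊗ₘ K) := ht'.comp_snd_compProd
  have hsq₁ : ∫ z, t z.1 ^ 2 ∂(ψ ⊗ₘ K) = ∫ x, t x ^ 2 ∂ψ :=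
    integral_comp_fst_compProd (ht.1.pow 2)
  have hsq₂ : ∫ z, t z.2 ^ 2 ∂(ψ ⊗ₘ K) = ∫ x, t x ^ 2 ∂ψ := by
    simpa only [hK, Pi.pow_apply] using integral_comp_snd_compProd (μ := ψ) (κ := K) (ht'.1.pow 2)
  have hmul : ∫ z, t z.1 * t z.2 ∂(ψ ⊗ₘ K) = ∫ x, (∫ y, t y ∂(K x)) * t x ∂ψ := by
    rw [Measure.integral_compProd (f := fun z => t z.1 * t z.2) (h₁.integrable_mul h₂)]
    simp only [integral_const_mul, mul_comm]
  have hi₁ : Integrable (fun z : X × X => t z.2 ^ 2 + t z.1 ^ 2) (ψ ⊗ₘ K) :=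
    h₂.integrable_sq.add h₁.integrable_sq
  have hi₂ : Integrable (fun z : X × X => 2 * (t z.1 * t z.2)) (ψ ⊗ₘ K) :=
    (h₁.integrable_mul h₂).const_mul 2
  have hexpand : ∫ z, (t z.2 - t z.1) ^ 2 ∂(ψ ⊗ₘ K)
      = ∫ z, t z.2 ^ 2 ∂(ψ ⊗ₘ K) + ∫ z, t z.1 ^ 2 ∂(ψ ⊗ₘ K)
        - 2 * ∫ z, t z.1 * t z.2 ∂(ψ ⊗ₘ K) := by
    rw [← integral_add h₂.integrable_sq h₁.integrable_sq, ← integral_const_mul,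
      ← integral_sub hi₁ hi₂]
    exact integral_congr_ae (.of_forall fun z => by ring)
  rw [dirichletForm, hexpand, hsq₁, hsq₂, hmul]
  ring

lemma ofReal_integral_sq_sub_eq_lintegral (hK : K ∘ₘ ψ = ψ) (htm : Measurable t)
    (ht : MemLp t 2 ψ) :
    ENNReal.ofReal (∫ z, (t z.2 - t z.1) ^ 2 ∂(ψ ⊗ₘ K))
      = ∫⁻ x, ∫⁻ y, ENNReal.ofReal ((t y - t x) ^ 2) ∂(K x) ∂ψ := by
  have ht' : MemLp t 2 (K ∘ₘ ψ) := by rwa [hK]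
  have hint : Integrable (fun z : X × X => (t z.2 - t z.1) ^ 2) (ψ ⊗ₘ K) :=
    (ht'.comp_snd_compProd.sub ht.comp_fst_compProd).integrable_sq
  rw [ofReal_integral_eq_lintegral_ofReal hint (.of_forall fun z => sq_nonneg _)]
  exact Measure.lintegral_compProd (by fun_prop)

lemma const_mul_dirichletForm_le_of_measurable [MeasurableSingletonClass X] {P Q : Kernel X X}
    [IsMarkovKernel P] [IsMarkovKernel Q] (hP : P ∘ₘ ψ = ψ) (hQ : Q ∘ₘ ψ = ψ) {c : ℝ}
    (hdom : ∀ᵐ x ∂ψ, ∀ A : Set X, MeasurableSet A →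
      ENNReal.ofReal c * Q x (A \ {x}) ≤ P x (A \ {x}))
    (htm : Measurable t) (ht : MemLp t 2 ψ) :
    c * dirichletForm ψ Q t ≤ dirichletForm ψ P t := by
  set IP := ∫ z, (t z.2 - t z.1) ^ 2 ∂(ψ ⊗ₘ P)
  set IQ := ∫ z, (t z.2 - t z.1) ^ 2 ∂(ψ ⊗ₘ Q)
  have hIQ : 0 ≤ IQ := integral_nonneg fun z => sq_nonneg _
  have hle : c * IQ ≤ IP := by
    rw [← ENNReal.ofReal_le_ofReal_iff (integral_nonneg fun z => sq_nonneg _),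
      ENNReal.ofReal_mul' hIQ, ofReal_integral_sq_sub_eq_lintegral hQ htm ht,
      ofReal_integral_sq_sub_eq_lintegral hP htm ht,
      ← lintegral_const_mul' _ _ ENNReal.ofReal_ne_top]
    refine lintegral_mono_ae ?_
    filter_upwards [hdom] with x hx
    exact const_mul_lintegral_le_of_le_off_singleton hx (by simp)
  calc c * dirichletForm ψ Q t = 2⁻¹ * (c * IQ) := by rw [dirichletForm]; ring
    _ ≤ 2⁻¹ * IP := by gcongr
    _ = dirichletForm ψ P t := rfl

theorem const_mul_dirichletForm_le [MeasurableSingletonClass X] {P Q : Kernel X X}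
    [IsMarkovKernel P] [IsMarkovKernel Q] (hP : P ∘ₘ ψ = ψ) (hQ : Q ∘ₘ ψ = ψ) {c : ℝ}
    (hdom : ∀ᵐ x ∂ψ, ∀ A : Set X, MeasurableSet A →
      ENNReal.ofReal c * Q x (A \ {x}) ≤ P x (A \ {x}))
    (ht : MemLp t 2 ψ) :
    c * dirichletForm ψ Q t ≤ dirichletForm ψ P t := by
  have hmk : t =ᵐ[ψ] ht.1.mk t := ht.1.ae_eq_mk
  rw [dirichletForm_congr hQ hmk, dirichletForm_congr hP hmk]
  exact const_mul_dirichletForm_le_of_measurable hP hQ hdom ht.1.stronglyMeasurable_mk.measurable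
    (ht.ae_eq hmk)

end ProbabilityTheory

theorem stmt_9_general {X : Type*} [MeasurableSpace X] [MeasurableSingletonClass X]
    (ψ : Measure X) [IsProbabilityMeasure ψ]
    (P Q : Kernel X X) [IsMarkovKernel P] [IsMarkovKernel Q]
    (hPinv : ψ.bind (fun x => P x) = ψ) (hQinv : ψ.bind (fun x => Q x) = ψ)
    (c : ℝ)
    (hdom : ∀ᵐ x ∂ψ, ∀ A : Set X, MeasurableSet A →
      ENNReal.ofReal c * Q x (A \ {x}) ≤ P x (A \ {x}))
    (t : X → ℝ) (ht : MemLp t 2 ψ) :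
    (∫ x, (∫ y, t y ∂(P x)) * t x ∂ψ)
      ≤ c * (∫ x, (∫ y, t y ∂(Q x)) * t x ∂ψ) + (1 - c) * ∫ x, (t x) ^ 2 ∂ψ := by
  have h := const_mul_dirichletForm_le hPinv hQinv hdom ht
  rw [dirichletForm_eq hPinv ht, dirichletForm_eq hQinv ht] at h
  linarith

/-- Theorem 1, part 1: if `P(x, A\{x}) ≥ c Q(x, A\{x})` off the diagonal for ψ-a.e. `x`
(common invariant distribution ψ, `c > 0`), then for every mean-zero `t ∈ L²(ψ)`,
`⟨Pt, t⟩_ψ ≤ c⟨Qt, t⟩_ψ + (1−c)σ²_t`. -/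
theorem stmt_9 {X : Type*} [MeasurableSpace X] [MeasurableSingletonClass X]
    (ψ : Measure X) [IsProbabilityMeasure ψ]
    (P Q : Kernel X X) [IsMarkovKernel P] [IsMarkovKernel Q]
    (hPinv : ψ.bind (fun x => P x) = ψ) (hQinv : ψ.bind (fun x => Q x) = ψ)
    (c : ℝ) (hc : 0 < c)
    (hdom : ∀ᵐ x ∂ψ, ∀ A : Set X, MeasurableSet A →
      ENNReal.ofReal c * Q x (A \ {x}) ≤ P x (A \ {x}))
    (t : X → ℝ) (ht : MemLp t 2 ψ) (ht0 : (∫ x, t x ∂ψ) = 0) :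
    (∫ x, (∫ y, t y ∂(P x)) * t x ∂ψ)
      ≤ c * (∫ x, (∫ y, t y ∂(Q x)) * t x ∂ψ) + (1 - c) * ∫ x, (t x) ^ 2 ∂ψ :=
  stmt_9_general ψ P Q hPinv hQinv c hdom t ht
end
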